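/- arXiv:2503.00718 — 2 statements merged into one kernel-verified Lean document; each statement's English description precedes it below -/
import Mathlib

section
/- With the discrete kernel p(x^γ_n, x^γ_{n+1}) for the perturbed dynamics, change-of-variable Jacobian J^γ_{n+1} = (1 + γ δσ^γ(x^γ_n)/σ(x_n))^M, and damped perturbation v defined by v_{n+1} = v_n - α_n v_n Δt + δF^γ(x^γ_n)Δt + δσ^γ(x^γ_n)Δb_n, the sum of the logarithmic kernel derivative and the Jacobian derivative at γ=0 simplifies to δp/p + δJ = ⟨Δb_n, α_n v_n⟩/σ(x_n), i.e., the terms involving δF and δσ cancel exactly. -/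
/-!
The update rule makes the residual `v₁ - v₀ - δF Δt` equal to `δσ Δb - α Δt v₀`, so its pairing
with `Δb` is `δσ ‖Δb‖² - α Δt ⟨Δb, v₀⟩`. Divided by `σ Δt`, the first part cancels the
term `‖Δb‖² δσ / (σ Δt)`, the two `M δσ / σ` terms cancel each other, and only the damping
term `⟨Δb, α v₀⟩ / σ` survives.
-/

section DampedUpdate

variable {E : Type*} [NormedAddCommGroup E] [InnerProductSpace ℝ E]

lemma damped_update_sub_drift {Δt α δσ : ℝ} {Δb v0 v1 δF : E}
    (hv1 : v1 = v0 - (α * Δt) • v0 + Δt • δF + δσ • Δb) :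
    v1 - v0 - Δt • δF = δσ • Δb - (α * Δt) • v0 := by
  rw [hv1]; module

lemma inner_damped_update_sub_drift {Δt α δσ : ℝ} {Δb v0 v1 δF : E}
    (hv1 : v1 = v0 - (α * Δt) • v0 + Δt • δF + δσ • Δb) :
    inner ℝ Δb (v1 - v0 - Δt • δF) = δσ * ‖Δb‖ ^ 2 - α * Δt * inner ℝ Δb v0 := by
  rw [damped_update_sub_drift hv1, inner_sub_right, inner_smul_right, inner_smul_right,
    real_inner_self_eq_norm_sq]

end DampedUpdate

theorem path_kernel_cancellation_general
    (M : ℕ) (Δt σ α δσ : ℝ) (hΔt : 0 < Δt)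
    (Δb v0 v1 δF : EuclideanSpace ℝ (Fin M))
    (hv1 : v1 = v0 - (α * Δt) • v0 + Δt • δF + δσ • Δb) :
    (-(M : ℝ) * δσ / σ
        - (inner ℝ Δb (v1 - v0 - Δt • δF) : ℝ) / (σ * Δt)
        + ‖Δb‖ ^ 2 * δσ / (σ * Δt))
      + (M : ℝ) * δσ / σ
      = (inner ℝ Δb (α • v0) : ℝ) / σ := by
  rw [inner_damped_update_sub_drift hv1, inner_smul_right]
  field_simp [hΔt.ne']
  ring

/-- key cancellation: with
`v₁ = v₀ - αΔt v₀ + δF Δt + δσ Δb`, the sum of the logarithmic kernel derivative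
`δp/p = -M δσ/σ - ⟨Δb, v₁-v₀-δFΔt⟩/(σΔt) + ‖Δb‖² δσ/(σΔt)` and the Jacobian
derivative `δJ = M δσ/σ` equals `⟨Δb, αv₀⟩/σ`. -/
theorem path_kernel_cancellation
    (M : ℕ) (Δt σ α δσ : ℝ) (hΔt : 0 < Δt) (hσ : 0 < σ)
    (Δb v0 v1 δF : EuclideanSpace ℝ (Fin M))
    (hv1 : v1 = v0 - (α * Δt) • v0 + Δt • δF + δσ • Δb) :
    (-(M : ℝ) * δσ / σ
        - (inner ℝ Δb (v1 - v0 - Δt • δF) : ℝ) / (σ * Δt)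
        + ‖Δb‖ ^ 2 * δσ / (σ * Δt))
      + (M : ℝ) * δσ / σ
      = (inner ℝ Δb (α • v0) : ℝ) / σ :=
  path_kernel_cancellation_general M Δt σ α δσ hΔt Δb v0 v1 δF hv1
end

section
/- Let Z ~ N(0, I_M), Φ : ℝ^M → ℝ differentiable with polynomially bounded Φ and ∇Φ, and let f(γ) = E[Φ((1+γ)Z)] for γ > -1. Then f is differentiable and f'(γ) = E[Φ((1+γ)Z)(‖Z‖² - M)]/(1+γ); in particular at γ = 0, d/dγ E[Φ((1+γ)Z)]|_{γ=0} = E[Φ(Z)(‖Z‖² - M)]. -/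
/-!
The substitution `y = c • z` moves the scale from the test function onto the Gaussian:
`∫ Φ (c • z) e^{-‖z‖²/2} dz = ∫ Φ y p_c(y) dy` with `p_c(y) = c⁻ⁿ e^{-‖y‖²/(2c²)}`. Now only the
kernel depends on `c`, with `∂_c p_c = p_c · (‖y‖²/c² - n)/c`, and for `c` in a compact subinterval
of `(0, ∞)` this derivative is bounded by a polynomial times a fixed Gaussian. Against a
polynomially bounded `Φ` one may therefore differentiate under the integral sign, and undoing the
substitution gives the formula.
-/

open MeasureTheory Real Module

/-- The density of `c • Z` at a point of norm `t`, for `Z` standard Gaussian in dimension `n`,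
without the normalising factor `(2π)^(-n/2)`. -/
noncomputable def scaledGaussianKernel (n : ℕ) (c t : ℝ) : ℝ :=
  (c ^ n)⁻¹ * exp (-t ^ 2 / (2 * c ^ 2))

/-- `∂_c log p_c` for the kernel `p_c = scaledGaussianKernel n c`. -/
noncomputable def scaledGaussianScore (n : ℕ) (c t : ℝ) : ℝ :=
  (t ^ 2 / c ^ 2 - n) / c

lemma scaledGaussianKernel_nonneg (n : ℕ) {c : ℝ} (hc : 0 ≤ c) (t : ℝ) :
    0 ≤ scaledGaussianKernel n c t := by
  unfold scaledGaussianKernel; positivity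

lemma hasDerivAt_scaledGaussianKernel (n : ℕ) (t : ℝ) {c : ℝ} (hc : c ≠ 0) :
    HasDerivAt (fun c => scaledGaussianKernel n c t)
      (scaledGaussianKernel n c t * scaledGaussianScore n c t) c := by
  have hpow : HasDerivAt (fun c : ℝ => (c ^ n)⁻¹) (-(n / c) * (c ^ n)⁻¹) c := by
    refine ((hasDerivAt_pow n c).inv (pow_ne_zero n hc)).congr_deriv ?_
    rcases n with _ | n
    · simp
    · rw [Nat.add_sub_cancel]; field_simp; ring
  have hexp : HasDerivAt (fun c : ℝ => exp (-t ^ 2 / (2 * c ^ 2)))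
      (exp (-t ^ 2 / (2 * c ^ 2)) * (t ^ 2 / c ^ 3)) c := by
    refine HasDerivAt.exp ?_
    have := (((hasDerivAt_pow 2 c).const_mul 2).inv (by positivity)).const_mul (-t ^ 2)
    simp only [div_eq_mul_inv]
    refine this.congr_deriv ?_
    field_simp; ring
  refine (hpow.mul hexp).congr_deriv ?_
  unfold scaledGaussianKernel scaledGaussianScore; field_simp; ring

lemma scaledGaussianKernel_le (n : ℕ) {a c A t : ℝ} (ha : 0 < a) (hac : a ≤ c) (hcA : c ≤ A) :
    scaledGaussianKernel n c t ≤ (a ^ n)⁻¹ * exp (-(1 / (2 * A ^ 2)) * t ^ 2) := by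
  have hc : 0 < c := ha.trans_le hac
  unfold scaledGaussianKernel
  gcongr
  rw [neg_div, neg_mul, neg_le_neg_iff, one_div_mul_eq_div]
  gcongr

lemma abs_scaledGaussianScore_le (n : ℕ) {a c t : ℝ} (ha : 0 < a) (hac : a ≤ c) (ht : 0 ≤ t) :
    |scaledGaussianScore n c t| ≤ (a⁻¹ ^ 2 + n) * a⁻¹ * (1 + t) ^ 2 := by
  have hc : 0 < c := ha.trans_le hac
  have ht2 : t ^ 2 / c ^ 2 ≤ a⁻¹ ^ 2 * (1 + t) ^ 2 := by
    rw [← div_pow, ← mul_pow, ← div_eq_inv_mul]; gcongr; linarith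
  have hone : (1 : ℝ) ≤ (1 + t) ^ 2 := by nlinarith
  rw [scaledGaussianScore, abs_div, abs_of_pos hc, div_le_iff₀ hc]
  calc |t ^ 2 / c ^ 2 - n| ≤ (a⁻¹ ^ 2 + n) * (1 + t) ^ 2 := by
        rw [abs_le]; constructor <;> nlinarith [div_nonneg (sq_nonneg t) (sq_nonneg c),
          (Nat.cast_nonneg n : (0 : ℝ) ≤ n)]
    _ = (a⁻¹ ^ 2 + n) * a⁻¹ * (1 + t) ^ 2 * a := by field_simp
    _ ≤ (a⁻¹ ^ 2 + n) * a⁻¹ * (1 + t) ^ 2 * c := by gcongr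

lemma one_add_pow_mul_exp_neg_mul_sq_le (k : ℕ) {b t : ℝ} (hb : 0 < b) (ht : 0 ≤ t) :
    (1 + t) ^ k * exp (-b * t ^ 2) ≤ exp (k ^ 2 / (2 * b)) * exp (-(b / 2) * t ^ 2) := by
  have hpow : (1 + t) ^ k ≤ exp (k * t) := by
    rw [exp_nat_mul]; gcongr; linarith [add_one_le_exp t]
  have hamgm : k * t ≤ k ^ 2 / (2 * b) + b / 2 * t ^ 2 := by
    rw [div_add' _ _ _ (by positivity), le_div_iff₀ (by positivity)]
    nlinarith [sq_nonneg (k - b * t)]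
  calc (1 + t) ^ k * exp (-b * t ^ 2) ≤ exp (k * t) * exp (-b * t ^ 2) := by gcongr
    _ ≤ exp (k ^ 2 / (2 * b)) * exp (-(b / 2) * t ^ 2) := by
      rw [← exp_add, ← exp_add]; exact exp_le_exp.2 (by linarith)

section

variable {E : Type*} [NormedAddCommGroup E] [InnerProductSpace ℝ E] [FiniteDimensional ℝ E]
  [MeasurableSpace E] [BorelSpace E]

lemma integrable_exp_neg_mul_norm_sq {b : ℝ} (hb : 0 < b) :
    Integrable (fun y : E => exp (-b * ‖y‖ ^ 2)) := by
  refine (GaussianFourier.integrable_cexp_neg_mul_sq_norm_add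
    (V := E) (b := b) (by simpa using hb) 0 0).norm.congr (.of_forall fun y => ?_)
  simp [Complex.norm_exp, ← Complex.ofReal_pow]

lemma integrable_one_add_norm_pow_mul_exp_neg_mul_norm_sq (k : ℕ) {b : ℝ} (hb : 0 < b) :
    Integrable (fun y : E => (1 + ‖y‖) ^ k * exp (-b * ‖y‖ ^ 2)) := by
  refine ((integrable_exp_neg_mul_norm_sq (half_pos hb)).const_mul (exp (k ^ 2 / (2 * b)))).mono'
    (by fun_prop) (.of_forall fun y => ?_)
  rw [norm_of_nonneg (by positivity)]
  exact one_add_pow_mul_exp_neg_mul_sq_le k hb (norm_nonneg y)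

lemma integral_comp_smul_mul_exp_neg_norm_sq (Ψ : E → ℝ) {c : ℝ} (hc : 0 < c) :
    ∫ z, Ψ (c • z) * exp (-‖z‖ ^ 2 / 2)
      = ∫ y, Ψ y * scaledGaussianKernel (finrank ℝ E) c ‖y‖ := by
  have hnorm : ∀ z : E, ‖c • z‖ ^ 2 / (2 * c ^ 2) = ‖z‖ ^ 2 / 2 := fun z => by
    rw [norm_smul, norm_of_nonneg hc.le]; field_simp
  simp only [scaledGaussianKernel, mul_left_comm _ (_ ^ _)⁻¹, integral_const_mul, neg_div]
  rw [← smul_eq_mul, ← Measure.integral_comp_smul_of_nonneg volume (hR := hc.le)]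
  simp only [hnorm]

lemma hasDerivAt_integral_mul_scaledGaussianKernel (n : ℕ) {Φ : E → ℝ}
    (hΦ : AEStronglyMeasurable Φ) {C : ℝ} {k : ℕ} (hΦC : ∀ y, |Φ y| ≤ C * (1 + ‖y‖) ^ k)
    {c : ℝ} (hc : 0 < c) :
    HasDerivAt (fun c => ∫ y, Φ y * scaledGaussianKernel n c ‖y‖)
      (∫ y, Φ y * (scaledGaussianKernel n c ‖y‖ * scaledGaussianScore n c ‖y‖)) c := by
  have hC : 0 ≤ C := (abs_nonneg _).trans (by simpa using hΦC 0)
  have hmeas : ∀ x, AEStronglyMeasurable (fun y => Φ y * scaledGaussianKernel n x ‖y‖) :=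
    fun x => hΦ.mul (by unfold scaledGaussianKernel; fun_prop)
  have hF_int : Integrable (fun y => Φ y * scaledGaussianKernel n c ‖y‖) := by
    refine ((integrable_one_add_norm_pow_mul_exp_neg_mul_norm_sq k
      (b := 1 / (2 * c ^ 2)) (by positivity)).const_mul (C * (c ^ n)⁻¹)).mono' (hmeas c)
      (.of_forall fun y => ?_)
    rw [norm_mul, norm_of_nonneg (scaledGaussianKernel_nonneg n hc.le _), norm_eq_abs]
    calc |Φ y| * scaledGaussianKernel n c ‖y‖
        ≤ C * (1 + ‖y‖) ^ k * ((c ^ n)⁻¹ * exp (-(1 / (2 * c ^ 2)) * ‖y‖ ^ 2)) := by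
          gcongr
          · exact scaledGaussianKernel_nonneg n hc.le _
          · exact hΦC y
          · exact scaledGaussianKernel_le n hc le_rfl le_rfl
      _ = _ := by ring
  have hbound : ∀ y, ∀ x ∈ Set.Icc (c / 2) (2 * c),
      ‖Φ y * (scaledGaussianKernel n x ‖y‖ * scaledGaussianScore n x ‖y‖)‖ ≤
        C * ((c / 2) ^ n)⁻¹ * (((c / 2)⁻¹ ^ 2 + n) * (c / 2)⁻¹) *
          ((1 + ‖y‖) ^ (k + 2) * exp (-(1 / (2 * (2 * c) ^ 2)) * ‖y‖ ^ 2)) := by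
    rintro y x ⟨hx₁, hx₂⟩
    have hx : 0 < x := by linarith
    rw [norm_mul, norm_mul, norm_of_nonneg (scaledGaussianKernel_nonneg n hx.le _), norm_eq_abs,
      norm_eq_abs]
    calc |Φ y| * (scaledGaussianKernel n x ‖y‖ * |scaledGaussianScore n x ‖y‖|)
        ≤ C * (1 + ‖y‖) ^ k * (((c / 2) ^ n)⁻¹ * exp (-(1 / (2 * (2 * c) ^ 2)) * ‖y‖ ^ 2) *
          (((c / 2)⁻¹ ^ 2 + n) * (c / 2)⁻¹ * (1 + ‖y‖) ^ 2)) := by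
          gcongr ?_ * (?_ * ?_)
          · exact mul_nonneg (scaledGaussianKernel_nonneg n hx.le _) (abs_nonneg _)
          · exact hΦC y
          · exact scaledGaussianKernel_le n (by positivity) hx₁ hx₂
          · exact abs_scaledGaussianScore_le n (by positivity) hx₁ (norm_nonneg y)
      _ = _ := by ring
  refine (hasDerivAt_integral_of_dominated_loc_of_deriv_le
    (Icc_mem_nhds (by linarith) (by linarith)) (.of_forall hmeas) hF_int ?_ (.of_forall hbound)
    ((integrable_one_add_norm_pow_mul_exp_neg_mul_norm_sq (k + 2) (by positivity)).const_mul _)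
    (.of_forall fun y x hx => ?_)).2
  · exact hΦ.mul (by unfold scaledGaussianKernel scaledGaussianScore; fun_prop)
  · exact (hasDerivAt_scaledGaussianKernel n ‖y‖ (by linarith [hx.1])).const_mul (Φ y)

theorem hasDerivAt_integral_comp_smul_mul_exp_neg_norm_sq {Φ : E → ℝ}
    (hΦ : AEStronglyMeasurable Φ) {C : ℝ} {k : ℕ} (hΦC : ∀ y, |Φ y| ≤ C * (1 + ‖y‖) ^ k)
    {c : ℝ} (hc : 0 < c) :
    HasDerivAt (fun c => ∫ z, Φ (c • z) * exp (-‖z‖ ^ 2 / 2))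
      ((∫ z, Φ (c • z) * (‖z‖ ^ 2 - finrank ℝ E) * exp (-‖z‖ ^ 2 / 2)) / c) c := by
  have hvalue : (∫ z, Φ (c • z) * (‖z‖ ^ 2 - finrank ℝ E) * exp (-‖z‖ ^ 2 / 2)) / c =
      ∫ y, Φ y * (scaledGaussianKernel (finrank ℝ E) c ‖y‖ *
        scaledGaussianScore (finrank ℝ E) c ‖y‖) := by
    have h := integral_comp_smul_mul_exp_neg_norm_sq
      (fun y => Φ y * (‖y‖ ^ 2 / c ^ 2 - finrank ℝ E)) hc
    simp only [norm_smul, norm_of_nonneg hc.le, mul_pow,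
      mul_div_cancel_left₀ _ (pow_ne_zero 2 hc.ne')] at h
    rw [h, div_eq_mul_inv, ← integral_mul_const]
    congr 1; ext y; rw [scaledGaussianScore]; ring
  rw [hvalue]
  exact (hasDerivAt_integral_mul_scaledGaussianKernel _ hΦ hΦC hc).congr_of_eventuallyEq
    ((eventually_gt_nhds hc).mono fun x hx => integral_comp_smul_mul_exp_neg_norm_sq Φ hx)

end

theorem diffusion_scaling_kernel_derivative_general
    (M : ℕ) (Φ : EuclideanSpace ℝ (Fin M) → ℝ)
    (hΦ : Differentiable ℝ Φ)
    (hΦgrowth : ∃ C k, ∀ z, |Φ z| ≤ C * (1 + ‖z‖) ^ k)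
    (g : EuclideanSpace ℝ (Fin M) → ℝ)
    (hg : ∀ z, g z = (2 * π) ^ (-(M : ℝ) / 2) * Real.exp (-‖z‖ ^ 2 / 2)) :
    (∀ γ : ℝ, -1 < γ →
      HasDerivAt (fun γ' : ℝ => ∫ z, Φ ((1 + γ') • z) * g z)
        ((∫ z, Φ ((1 + γ) • z) * (‖z‖ ^ 2 - M) * g z) / (1 + γ)) γ) ∧
    HasDerivAt (fun γ' : ℝ => ∫ z, Φ ((1 + γ') • z) * g z)
      (∫ z, Φ z * (‖z‖ ^ 2 - M) * g z) 0 := by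
  obtain ⟨C, k, hΦC⟩ := hΦgrowth
  set K : ℝ := (2 * π) ^ (-(M : ℝ) / 2)
  have hK : ∀ ψ : EuclideanSpace ℝ (Fin M) → ℝ,
      ∫ z, ψ z * g z = K * ∫ z, ψ z * exp (-‖z‖ ^ 2 / 2) := fun ψ => by
    simp only [hg, mul_left_comm (ψ _) K, integral_const_mul]
  have hderiv : ∀ γ : ℝ, -1 < γ →
      HasDerivAt (fun γ' : ℝ => ∫ z, Φ ((1 + γ') • z) * g z)
        ((∫ z, Φ ((1 + γ) • z) * (‖z‖ ^ 2 - M) * g z) / (1 + γ)) γ := by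
    intro γ hγ
    have h := hasDerivAt_integral_comp_smul_mul_exp_neg_norm_sq
      hΦ.continuous.aestronglyMeasurable hΦC (by linarith : 0 < 1 + γ)
    rw [finrank_euclideanSpace_fin] at h
    simp only [hK, mul_div_assoc]
    exact (h.const_mul K).comp_const_add 1 γ
  exact ⟨hderiv, by simpa using hderiv 0 neg_one_lt_zero⟩

/-- for `Z ~ N(0,I_M)` and `f(γ) = E[Φ((1+γ)Z)]`, `f` is
differentiable for `γ > -1` with
`f'(γ) = E[Φ((1+γ)Z)(‖Z‖² - M)]/(1+γ)`; in particular
`f'(0) = E[Φ(Z)(‖Z‖² - M)]`. -/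
theorem diffusion_scaling_kernel_derivative
    (M : ℕ) (Φ : EuclideanSpace ℝ (Fin M) → ℝ)
    (hΦ : Differentiable ℝ Φ)
    (hΦgrowth : ∃ C k, ∀ z, |Φ z| ≤ C * (1 + ‖z‖) ^ k)
    (hgradgrowth : ∃ C k, ∀ z, ‖fderiv ℝ Φ z‖ ≤ C * (1 + ‖z‖) ^ k)
    (g : EuclideanSpace ℝ (Fin M) → ℝ)
    (hg : ∀ z, g z = (2 * π) ^ (-(M : ℝ) / 2) * Real.exp (-‖z‖ ^ 2 / 2)) :
    (∀ γ : ℝ, -1 < γ →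
      HasDerivAt (fun γ' : ℝ => ∫ z, Φ ((1 + γ') • z) * g z)
        ((∫ z, Φ ((1 + γ) • z) * (‖z‖ ^ 2 - M) * g z) / (1 + γ)) γ) ∧
    HasDerivAt (fun γ' : ℝ => ∫ z, Φ ((1 + γ') • z) * g z)
      (∫ z, Φ z * (‖z‖ ^ 2 - M) * g z) 0 :=
  diffusion_scaling_kernel_derivative_general M Φ hΦ hΦgrowth g hg
end
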